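/- Let V₃ = {(x,y,z) ∈ ℕ³ : gcd(x,y,z) = 1}. Then for every positive integer L, |V₃ ∩ [1,L]³| / L³ ≥ 1/ζ(3) − 3ζ(2)/L − (2 log L + 4)/L². -/

import Mathlib

set_option maxHeartbeats 1000000

open Finset ArithmeticFunction
open scoped ArithmeticFunction.Moebius ArithmeticFunction.zeta

/-- The value of the Riemann zeta function at a natural number `k ≥ 2`,
as the real series `∑ 1/n^k` (the `n = 0` term vanishes). -/
noncomputable def zetaR (k : ℕ) : ℝ := ∑' n : ℕ, 1 / (n : ℝ) ^ k

/-- The number of points of `V₃ ∩ [1,L]³`, where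
`V₃ = {(x,y,z) ∈ ℕ³ : gcd(x,y,z) = 1}` is the set of points of `ℕ³`
visible from the origin. -/
def visCount3 (L : ℕ) : ℕ :=
  (((Fintype.piFinset fun _ : Fin 3 => Finset.Icc 1 L)).filter
      (fun x => Finset.univ.gcd x = 1)).card

lemma sum_div_moebius (g : ℕ) (hg : g ≠ 0) :
    (if g = 1 then (1:ℤ) else 0) = ∑ d ∈ g.divisors, μ d := by
  have h := congrArg (fun f : ArithmeticFunction ℤ => f g) (coe_moebius_mul_coe_zeta (R := ℤ))
  simp only [mul_apply, one_apply, intCoe_apply, natCoe_apply, zeta_apply, Int.cast_id] at h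
  rw [Nat.sum_divisorsAntidiagonal
    (f := fun d e => (μ d) * (((if e = 0 then 0 else 1 : ℕ)) : ℤ))] at h
  rw [← h]
  apply Finset.sum_congr rfl
  intro d hd
  have h2 : g / d ≠ 0 := Nat.div_ne_zero_iff.mpr ⟨(Nat.pos_of_mem_divisors hd).ne',
    (Nat.le_of_dvd (Nat.pos_of_ne_zero hg) (Nat.dvd_of_mem_divisors hd))⟩
  simp [h2]

lemma card_dvd_box (L d : ℕ) :
    ((Fintype.piFinset fun _ : Fin 3 => Finset.Icc 1 L).filter
      (fun x => ∀ i, d ∣ x i)).card = (L / d) ^ 3 := by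
  have : ((Fintype.piFinset fun _ : Fin 3 => Finset.Icc 1 L).filter
      (fun x => ∀ i, d ∣ x i)) = Fintype.piFinset fun _ : Fin 3 =>
        (Finset.Icc 1 L).filter (fun m => d ∣ m) := by
    ext x
    simp [Fintype.mem_piFinset, forall_and]
  rw [this, Fintype.card_piFinset]
  have : ((Finset.Icc 1 L).filter (fun m => d ∣ m)).card = L / d := by
    rw [show Finset.Icc 1 L = Finset.Ioc 0 L by rw [← Finset.Icc_add_one_left_eq_Ioc, zero_add],
      Nat.Ioc_filter_dvd_card_eq_div]
  simp [this]

lemma visCount3_eq (L : ℕ) :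
    (visCount3 L : ℤ) = ∑ d ∈ Finset.Icc 1 L, μ d * ((L / d : ℕ) : ℤ) ^ 3 := by
  classical
  set B := Fintype.piFinset fun _ : Fin 3 => Finset.Icc 1 L with hB
  have key : ∀ x ∈ B, (if Finset.univ.gcd x = 1 then (1:ℤ) else 0)
      = ∑ d ∈ Finset.Icc 1 L, (if d ∣ Finset.univ.gcd x then μ d else 0) := by
    intro x hx
    have hx' : ∀ i, x i ∈ Finset.Icc 1 L := by
      intro i
      exact Fintype.mem_piFinset.mp hx i
    have h1 : 1 ≤ x 0 := (Finset.mem_Icc.mp (hx' 0)).1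
    have h2 : x 0 ≤ L := (Finset.mem_Icc.mp (hx' 0)).2
    have hdvd : Finset.univ.gcd x ∣ x 0 := Finset.gcd_dvd (Finset.mem_univ 0)
    have hg0 : Finset.univ.gcd x ≠ 0 := by
      intro h
      rw [h] at hdvd
      have := Nat.eq_zero_of_zero_dvd hdvd
      omega
    have hgL : Finset.univ.gcd x ≤ L :=
      le_trans (Nat.le_of_dvd (by omega) hdvd) h2
    rw [sum_div_moebius _ hg0, ← Finset.sum_filter]
    congr 1
    ext d
    simp only [Nat.mem_divisors, Finset.mem_filter, Finset.mem_Icc]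
    constructor
    · rintro ⟨hd, -⟩
      exact ⟨⟨Nat.one_le_iff_ne_zero.mpr (by rintro rfl; exact hg0 (Nat.eq_zero_of_zero_dvd hd)),
        le_trans (Nat.le_of_dvd (Nat.pos_of_ne_zero hg0) hd) hgL⟩, hd⟩
    · rintro ⟨-, hd⟩
      exact ⟨hd, hg0⟩
  have step1 : (visCount3 L : ℤ)
      = ∑ x ∈ B, (if Finset.univ.gcd x = 1 then (1:ℤ) else 0) := by
    rw [visCount3, Finset.card_filter]
    push_cast
    rfl
  rw [step1, Finset.sum_congr rfl key, Finset.sum_comm]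
  apply Finset.sum_congr rfl
  intro d hd
  have : ∀ x : Fin 3 → ℕ, d ∣ Finset.univ.gcd x ↔ ∀ i, d ∣ x i := by
    intro x
    rw [Finset.dvd_gcd_iff]
    exact ⟨fun h i => h i (Finset.mem_univ i), fun h i _ => h i⟩
  calc ∑ x ∈ B, (if d ∣ Finset.univ.gcd x then (μ d : ℤ) else 0)
      = ∑ x ∈ B.filter (fun x => ∀ i, d ∣ x i), (μ d : ℤ) := by
        rw [Finset.sum_filter]
        exact Finset.sum_congr rfl fun x _ => by simp only [this x]
    _ = (B.filter (fun x => ∀ i, d ∣ x i)).card • (μ d : ℤ) := Finset.sum_const _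
    _ = μ d * ((L / d : ℕ) : ℤ) ^ 3 := by
        rw [hB, card_dvd_box, nsmul_eq_mul, mul_comm]
        push_cast
        ring

noncomputable def Mmu : ℝ := ∑' n : ℕ, (μ n : ℝ) / (n : ℝ) ^ 3

lemma summable_zeta3 : Summable (fun n : ℕ => 1 / (n : ℝ) ^ 3) :=
  Real.summable_one_div_nat_pow.mpr (by norm_num)

lemma summable_zeta2 : Summable (fun n : ℕ => 1 / (n : ℝ) ^ 2) :=
  Real.summable_one_div_nat_pow.mpr (by norm_num)

lemma abs_mu_real (n : ℕ) : |(μ n : ℝ)| ≤ 1 := by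
  have := abs_moebius_le_one (n := n)
  exact_mod_cast (by exact_mod_cast this : |(μ n : ℝ)| ≤ (1:ℝ))

lemma abs_mu_term (n : ℕ) : |(μ n : ℝ) / (n : ℝ) ^ 3| ≤ 1 / (n : ℝ) ^ 3 := by
  rw [abs_div, abs_of_nonneg (by positivity : (0:ℝ) ≤ ((n:ℝ))^3)]
  gcongr
  exact abs_mu_real n

lemma summable_mu3 : Summable (fun n : ℕ => (μ n : ℝ) / (n : ℝ) ^ 3) :=
  Summable.of_abs (Summable.of_nonneg_of_le (fun n => abs_nonneg _) abs_mu_term summable_zeta3)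

open Complex in
lemma zetaR3_mul_Mmu : zetaR 3 * Mmu = 1 := by
  have hs : (1:ℝ) < (3:ℂ).re := by norm_num
  have h := LSeries_zeta_mul_Lseries_moebius (s := 3) hs
  have hz : LSeries (fun n => ((ζ n : ℕ) : ℂ)) 3 = (zetaR 3 : ℂ) := by
    rw [zetaR, ofReal_tsum]
    apply tsum_congr
    intro n
    rcases eq_or_ne n 0 with rfl | hn
    · simp [LSeries.term]
    · rw [LSeries.term_of_ne_zero hn]
      rw [show (3:ℂ) = ((3:ℕ):ℂ) by norm_num, cpow_natCast]
      simp [hn]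
  have hm : LSeries (fun n => ((μ n : ℤ) : ℂ)) 3 = (Mmu : ℂ) := by
    rw [Mmu, ofReal_tsum]
    apply tsum_congr
    intro n
    rcases eq_or_ne n 0 with rfl | hn
    · simp [LSeries.term]
    · rw [LSeries.term_of_ne_zero hn]
      rw [show (3:ℂ) = ((3:ℕ):ℂ) by norm_num, cpow_natCast]
      push_cast
      ring
  rw [hz, hm] at h
  exact_mod_cast h

lemma zetaR3_pos : 0 < zetaR 3 := by
  have h1 : (1:ℝ) / (1:ℕ) ^ 3 ≤ zetaR 3 := by
    apply Summable.le_tsum summable_zeta3 1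
    intro n _
    positivity
  norm_num at h1
  linarith

lemma Mmu_eq : Mmu = 1 / zetaR 3 := by
  rw [eq_div_iff zetaR3_pos.ne']
  linarith [zetaR3_mul_Mmu]

-- telescoping tail bound
lemma tail_bound (L : ℕ) (hL : 0 < L) :
    ∑' n : ℕ, 1 / (((n + (L+1) : ℕ)) : ℝ) ^ 3 ≤ 1 / (L:ℝ) ^ 2 := by
  have hsum : Summable (fun n : ℕ => 1 / (((n + (L+1) : ℕ)) : ℝ) ^ 3) :=
    (summable_nat_add_iff (f := fun n : ℕ => 1/(n:ℝ)^3) (L+1)).mpr summable_zeta3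
  apply Summable.tsum_le_of_sum_range_le hsum
  intro N
  have key : ∀ i : ℕ, 1 / (((i + (L+1) : ℕ)) : ℝ) ^ 3
      ≤ 1 / ((i:ℝ) + L) ^ 2 - 1 / (((i:ℕ)+1:ℝ) + L) ^ 2 := by
    intro i
    have hL1 : (1:ℝ) ≤ (L:ℝ) := by exact_mod_cast hL
    have ha : (1:ℝ) ≤ (i:ℝ) + L := by
      have : (0:ℝ) ≤ (i:ℝ) := Nat.cast_nonneg i
      linarith
    set a : ℝ := (i:ℝ) + L with hadef
    have hcast : (((i + (L+1) : ℕ)) : ℝ) = a + 1 := by push_cast; ring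
    have hcast2 : (((i:ℕ)+1:ℝ) + L) = a + 1 := by push_cast; ring
    rw [hcast, hcast2]
    have ha0 : 0 < a := by linarith
    have ha1 : 0 < a + 1 := by linarith
    rw [div_sub_div _ _ (by positivity) (by positivity), div_le_div_iff₀ (by positivity) (by positivity)]
    nlinarith [sq_nonneg a, pow_pos ha0 2, pow_pos ha1 2]
  calc ∑ i ∈ Finset.range N, 1 / (((i + (L+1) : ℕ)) : ℝ) ^ 3
      ≤ ∑ i ∈ Finset.range N, (1 / ((i:ℝ) + L) ^ 2 - 1 / (((i:ℕ)+1:ℝ) + L) ^ 2) :=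
        Finset.sum_le_sum fun i _ => key i
    _ = 1 / ((0:ℝ) + L) ^ 2 - 1 / ((N:ℝ) + L) ^ 2 := by
        have h := Finset.sum_range_sub' (f := fun i : ℕ => 1 / ((i:ℝ) + L) ^ 2) N
        push_cast at h ⊢
        exact h
    _ ≤ 1 / (L:ℝ) ^ 2 := by
        have : 0 < (L:ℝ) := by exact_mod_cast hL
        rw [zero_add]
        have : 0 ≤ 1 / ((N:ℝ) + L) ^ 2 := by positivity
        linarith

lemma mu_partial_ge (L : ℕ) (hL : 0 < L) :
    Mmu - 1 / (L:ℝ) ^ 2 ≤ ∑ d ∈ Finset.Icc 1 L, (μ d : ℝ) / (d : ℝ) ^ 3 := by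
  have hIcc : ∑ d ∈ Finset.Icc 1 L, (μ d : ℝ) / (d : ℝ) ^ 3
      = ∑ d ∈ Finset.range (L+1), (μ d : ℝ) / (d : ℝ) ^ 3 := by
    have h0 : ∑ d ∈ Finset.range (L+1), (μ d : ℝ) / (d : ℝ) ^ 3
        = (μ 0 : ℝ) / (0:ℝ) ^ 3 + ∑ d ∈ Finset.Ico 1 (L+1), (μ d : ℝ) / (d : ℝ) ^ 3 := by
      rw [Finset.range_eq_Ico]
      have := Finset.sum_eq_sum_Ico_succ_bot (Nat.succ_pos L) (fun d => (μ d : ℝ) / (d:ℝ)^3)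
      norm_num at this ⊢
      convert this using 2
    rw [h0, show Finset.Icc 1 L = Finset.Ico 1 (L+1) by rw [Finset.Ico_add_one_right_eq_Icc]]
    simp
  have hsplit := (Summable.sum_add_tsum_nat_add (f := fun n : ℕ => (μ n : ℝ) / (n : ℝ) ^ 3)
    (L+1) summable_mu3).symm
  have htail : |∑' n : ℕ, (μ (n + (L+1)) : ℝ) / ((n + (L+1) : ℕ) : ℝ) ^ 3| ≤ 1 / (L:ℝ) ^ 2 := by
    have hs1 : Summable (fun n : ℕ => |(μ (n + (L+1)) : ℝ) / ((n + (L+1) : ℕ) : ℝ) ^ 3|) :=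
      ((summable_nat_add_iff (f := fun n : ℕ => (μ n : ℝ)/(n:ℝ)^3) (L+1)).mpr
        summable_mu3).abs
    have hs2 : Summable (fun n : ℕ => 1 / ((n + (L+1) : ℕ) : ℝ) ^ 3) :=
      (summable_nat_add_iff (f := fun n : ℕ => 1/(n:ℝ)^3) (L+1)).mpr summable_zeta3
    calc |∑' n : ℕ, (μ (n + (L+1)) : ℝ) / ((n + (L+1) : ℕ) : ℝ) ^ 3|
        ≤ ∑' n : ℕ, |(μ (n + (L+1)) : ℝ) / ((n + (L+1) : ℕ) : ℝ) ^ 3| := by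
          have hs1' : Summable fun n : ℕ => ‖(μ (n + (L+1)) : ℝ) / ((n + (L+1) : ℕ) : ℝ) ^ 3‖ := by
            simpa only [Real.norm_eq_abs] using hs1
          simpa only [Real.norm_eq_abs] using norm_tsum_le_tsum_norm hs1'
      _ ≤ ∑' n : ℕ, 1 / ((n + (L+1) : ℕ) : ℝ) ^ 3 :=
          Summable.tsum_le_tsum (fun n => abs_mu_term _) hs1 hs2
      _ ≤ 1 / (L:ℝ) ^ 2 := tail_bound L hL
  rw [hIcc]
  have := hsplit
  rw [Mmu]
  have habs := abs_le.mp htail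
  linarith [hsplit, habs.1, habs.2]

lemma zeta2_partial_le (L : ℕ) :
    ∑ d ∈ Finset.Icc 1 L, 1 / (d : ℝ) ^ 2 ≤ zetaR 2 := by
  rw [zetaR]
  exact Summable.sum_le_tsum (Finset.Icc 1 L) (fun n _ => by positivity) summable_zeta2

lemma floor_cube_ge (L d : ℕ) (hd : 1 ≤ d) (hdL : d ≤ L) :
    (μ d : ℝ) * ((L / d : ℕ) : ℝ) ^ 3
      ≥ (μ d : ℝ) * ((L:ℝ) / d) ^ 3 - 3 * ((L:ℝ) / d) ^ 2 := by
  have hd0 : (0:ℝ) < d := by exact_mod_cast hd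
  set t : ℝ := (L:ℝ) / d with ht
  set m : ℝ := ((L / d : ℕ) : ℝ) with hm
  have hm0 : 0 ≤ m := Nat.cast_nonneg _
  have hmt : m ≤ t := Nat.cast_div_le
  have htm : t ≤ m + 1 := by
    rw [ht, div_le_iff₀ hd0]
    have h1 : L < d * (L / d) + d := by
      have h2 := Nat.div_add_mod L d
      have h3 := Nat.mod_lt L (show 0 < d by omega)
      omega
    have h4 : (L:ℝ) < d * m + d := by rw [hm]; exact_mod_cast h1
    linarith
  have hmu := abs_le.mp (abs_mu_real d)
  have ht0 : 0 ≤ t := le_trans hm0 hmt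
  have hfact : t ^ 3 - m ^ 3 = (t - m) * (t ^ 2 + t * m + m ^ 2) := by ring
  have hq : t ^ 2 + t * m + m ^ 2 ≤ 3 * t ^ 2 := by nlinarith [sq_nonneg (t - m)]
  have hq0 : 0 ≤ t ^ 2 + t * m + m ^ 2 := by positivity
  have hkey : t ^ 3 - m ^ 3 ≤ 3 * t ^ 2 := by
    rw [hfact]
    calc (t - m) * (t ^ 2 + t * m + m ^ 2) ≤ 1 * (t ^ 2 + t * m + m ^ 2) := by
          apply mul_le_mul_of_nonneg_right (by linarith) hq0
      _ ≤ 3 * t ^ 2 := by linarith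
  have hkey2 : 0 ≤ t ^ 3 - m ^ 3 := by
    rw [hfact]; exact mul_nonneg (by linarith) hq0
  nlinarith [mul_le_mul_of_nonneg_right hmu.2 hkey2]

theorem stmt17 (L : ℕ) (hL : 0 < L) :
    (visCount3 L : ℝ) / (L : ℝ) ^ 3
      ≥ 1 / zetaR 3 - 3 * zetaR 2 / L - (2 * Real.log L + 4) / (L : ℝ) ^ 2 := by
  have hl1 : (1:ℝ) ≤ (L:ℝ) := by exact_mod_cast hL
  have hl0 : (0:ℝ) < (L:ℝ) := by linarith
  have hL3 : (0:ℝ) < (L:ℝ) ^ 3 := by positivity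
  set S3 : ℝ := ∑ d ∈ Finset.Icc 1 L, (μ d : ℝ) / (d : ℝ) ^ 3 with hS3
  set S2 : ℝ := ∑ d ∈ Finset.Icc 1 L, 1 / (d : ℝ) ^ 2 with hS2
  have hA : (visCount3 L : ℝ) = ∑ d ∈ Finset.Icc 1 L, (μ d : ℝ) * ((L / d : ℕ) : ℝ) ^ 3 := by
    have h2 := congrArg (fun z : ℤ => (z:ℝ)) (visCount3_eq L)
    push_cast at h2
    exact h2
  have hB : ∑ d ∈ Finset.Icc 1 L, (μ d : ℝ) * ((L / d : ℕ) : ℝ) ^ 3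
      ≥ ∑ d ∈ Finset.Icc 1 L, ((μ d : ℝ) * ((L:ℝ) / d) ^ 3 - 3 * ((L:ℝ) / d) ^ 2) := by
    apply Finset.sum_le_sum
    intro d hd
    obtain ⟨hd1, hd2⟩ := Finset.mem_Icc.mp hd
    exact floor_cube_ge L d hd1 hd2
  have hC : ∑ d ∈ Finset.Icc 1 L, ((μ d : ℝ) * ((L:ℝ) / d) ^ 3 - 3 * ((L:ℝ) / d) ^ 2)
      = (L:ℝ) ^ 3 * S3 - 3 * (L:ℝ) ^ 2 * S2 := by
    rw [hS3, hS2, Finset.mul_sum, Finset.mul_sum, ← Finset.sum_sub_distrib]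
    apply Finset.sum_congr rfl
    intro d hd
    have hd1 : 1 ≤ d := (Finset.mem_Icc.mp hd).1
    have hd0 : ((d:ℝ)) ≠ 0 := by
      have : (0:ℝ) < d := by exact_mod_cast hd1
      linarith
    field_simp
  have hmu := mu_partial_ge L hL
  have hz2 := zeta2_partial_le L
  have hcount : (L:ℝ) ^ 3 * Mmu - (L:ℝ) - 3 * (L:ℝ) ^ 2 * zetaR 2 ≤ (visCount3 L : ℝ) := by
    have h1 : (L:ℝ) ^ 3 * (Mmu - 1 / (L:ℝ) ^ 2) ≤ (L:ℝ) ^ 3 * S3 :=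
      mul_le_mul_of_nonneg_left hmu (le_of_lt hL3)
    have h2 : 3 * (L:ℝ) ^ 2 * S2 ≤ 3 * (L:ℝ) ^ 2 * zetaR 2 := by
      apply mul_le_mul_of_nonneg_left hz2
      positivity
    have h3 : (L:ℝ) ^ 3 * (1 / (L:ℝ) ^ 2) = (L:ℝ) := by
      field_simp
    have h4 : (L:ℝ) ^ 3 * (Mmu - 1 / (L:ℝ) ^ 2) = (L:ℝ) ^ 3 * Mmu - (L:ℝ) := by
      rw [mul_sub, h3]
    nlinarith [hA, hB, hC]
  have hlog : 0 ≤ Real.log L := Real.log_nonneg hl1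
  have hexp : ((1 / zetaR 3 - 3 * zetaR 2 / (L:ℝ) - (2 * Real.log L + 4) / (L : ℝ) ^ 2)) * (L:ℝ)^3
      = (1 / zetaR 3) * (L:ℝ)^3 - 3 * zetaR 2 * (L:ℝ)^2 - (2 * Real.log L + 4) * (L:ℝ) := by
    field_simp
  have hgoal : (1 / zetaR 3 - 3 * zetaR 2 / (L:ℝ) - (2 * Real.log L + 4) / (L:ℝ)^2) * (L:ℝ)^3
      ≤ (visCount3 L : ℝ) := by
    rw [hexp]
    have h5 : (L:ℝ) ≤ (2*Real.log L + 4) * L := by nlinarith [hlog, hl0]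
    rw [Mmu_eq] at hcount
    linarith
  exact (le_div_iff₀ hL3).mpr hgoal
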